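/- For every natural number d and every complex number t with |t| < 1, the series ∑_{m=0}^{∞} L_d(m)·t^m converges with sum (1+t)^d/(1-t)^{d+1}. -/

import Mathlib

/-- `binom(y, d) = (∏_{k=0}^{d-1} (y - k)) / d!` for complex `y`. -/
noncomputable def cbinom (y : ℂ) (d : ℕ) : ℂ :=
  (∏ k ∈ Finset.range d, (y - k)) / (Nat.factorial d : ℂ)

/-- The Ehrhart polynomial of the `d`-dimensional cross-polytope. -/
noncomputable def Lpoly (d : ℕ) (x : ℂ) : ℂ :=
  ∑ j ∈ Finset.range (d + 1), (Nat.choose d j : ℂ) * cbinom ((d : ℂ) - (j : ℂ) + x) d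

/-!
At a natural number `m`, the summand `binom(d - j + m, d)` of `L_d(m)` is the ordinary binomial
coefficient `C(m + d - j, d)`, which vanishes for `m < j`. Shifting the negative binomial series
`∑ₘ C(m + d, d) tᵐ = 1 / (1 - t)^(d+1)` by `j` therefore gives `∑ₘ C(m + d - j, d) tᵐ = tʲ / (1 - t)^(d+1)`,
and summing these with weights `C(d, j)` produces `(1 + t)^d` by the binomial theorem.
-/

open Finset

theorem cbinom_natCast (n d : ℕ) : cbinom n d = n.choose d := by
  rw [cbinom, ← descPochhammer_eval_eq_prod_range, descPochhammer_eval_eq_descFactorial,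
    Nat.descFactorial_eq_factorial_mul_choose, Nat.cast_mul,
    mul_div_cancel_left₀ _ (Nat.cast_ne_zero.2 d.factorial_ne_zero)]

theorem Lpoly_natCast (d m : ℕ) :
    Lpoly d m = ∑ j ∈ range (d + 1), (d.choose j : ℂ) * (m + (d - j)).choose d := by
  refine sum_congr rfl fun j hj => ?_
  have hjd : j ≤ d := Nat.lt_succ_iff.1 (mem_range.1 hj)
  rw [show (d : ℂ) - j + m = ((m + (d - j) : ℕ) : ℂ) by push_cast [hjd]; ring, cbinom_natCast]

theorem hasSum_choose_add_mul_geometric {𝕜 : Type*} [NormedDivisionRing 𝕜]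
    {d j : ℕ} (hj : j ≤ d) {t : 𝕜} (ht : ‖t‖ < 1) :
    HasSum (fun m : ℕ => ((m + (d - j)).choose d : 𝕜) * t ^ m) (t ^ j / (1 - t) ^ (d + 1)) := by
  refine (hasSum_nat_add_iff' j).1 ?_
  have initial_terms_vanish : ∑ m ∈ range j, ((m + (d - j)).choose d : 𝕜) * t ^ m = 0 :=
    sum_eq_zero fun m hm => by
      rw [Nat.choose_eq_zero_of_lt (by have := mem_range.1 hm; omega), Nat.cast_zero, zero_mul]
  rw [initial_terms_vanish, sub_zero, ← mul_one_div]
  refine ((hasSum_choose_mul_geometric_of_norm_lt_one d ht).mul_left (t ^ j)).congr_fun fun m => ?_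
  rw [show m + j + (d - j) = m + d by omega, add_comm m j, pow_add]
  exact (Nat.cast_commute _ _).left_comm _

theorem sum_choose_mul_pow_eq_one_add_pow {R : Type*} [CommSemiring R] (d : ℕ) (t : R) :
    ∑ j ∈ range (d + 1), (d.choose j : R) * t ^ j = (1 + t) ^ d := by
  rw [add_comm 1 t, add_pow]
  exact sum_congr rfl fun j _ => by rw [one_pow, mul_one, mul_comm]

theorem hasSum_ehrhart_generating (d : ℕ) (t : ℂ) (ht : ‖t‖ < 1) :
    HasSum (fun m : ℕ => Lpoly d (m : ℂ) * t ^ m) ((1 + t) ^ d / (1 - t) ^ (d + 1)) := by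
  have hterms : ∀ j ∈ range (d + 1), HasSum
      (fun m : ℕ => (d.choose j : ℂ) * (((m + (d - j)).choose d : ℂ) * t ^ m))
      ((d.choose j : ℂ) * (t ^ j / (1 - t) ^ (d + 1))) := fun j hj =>
    (hasSum_choose_add_mul_geometric (Nat.lt_succ_iff.1 (mem_range.1 hj)) ht).mul_left _
  convert hasSum_sum hterms using 1
  · ext m
    simp only [Lpoly_natCast, sum_mul, mul_assoc]
  · simp only [← mul_div_assoc, ← sum_div, sum_choose_mul_pow_eq_one_add_pow]
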